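/- De Finetti representation of the multi-group Curie–Weiss model: Let M ≥ 1, let J be a symmetric positive definite M×M real matrix, let n_1,…,n_M ∈ ℕ with n = n_1+⋯+n_M, set α_λ := n_λ/n and √α := diag(√α_1,…,√α_M), and define F_{n,J}(x) := (1/2) xᵀ √α J^{−1} √α x − Σ_{λ=1}^M α_λ ln cosh(x_λ) for x ∈ ℝ^M. Then there exists a constant c > 0 (depending only on n_1,…,n_M and J) such that for every configuration (x_{λi}) ∈ {−1,1}^n, exp((1/2) Σ_{λ,ν=1}^M (J_{λν}/√(n_λ n_ν)) Σ_{i=1}^{n_λ} Σ_{j=1}^{n_ν} x_{λi} x_{νj}) = c ∫_{ℝ^M} P_{tanh m}(X_{11}=x_{11},…,X_{Mn_M}=x_{Mn_M}) exp(−n F_{n,J}(m)) dm, where the integral is with respect to Lebesgue measure on ℝ^M. -/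

import Mathlib

open MeasureTheory ProbabilityTheory Filter Topology Asymptotics

noncomputable section

/-- Configuration space for `M` groups of sizes `N 1, …, N M`: each voter casts a
vote encoded as a `Bool` (`true` ↦ +1, `false` ↦ −1). -/
abbrev Conf (M : ℕ) (N : Fin M → ℕ) : Type := ∀ lam : Fin M, Fin (N lam) → Bool

/-- The ±1 value of a vote. -/
def val (b : Bool) : ℝ := if b then 1 else -1

/-- The measure on `Bool` with mass `(1+b)/2` on `true` and `(1−b)/2` on `false`;
for `b ∈ [−1,1]` this is the law of a single vote with bias `b`. -/
def bern (b : ℝ) : Measure Bool :=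
  ENNReal.ofReal ((1 + b) / 2) • Measure.dirac true
    + ENNReal.ofReal ((1 - b) / 2) • Measure.dirac false

/-- The product measure `P_b` under which all votes are independent and each vote in
group `lam` has bias `b lam`. -/
def prodVote {M : ℕ} (N : Fin M → ℕ) (b : Fin M → ℝ) : Measure (Conf M N) :=
  Measure.pi fun lam => Measure.pi fun _ => bern (b lam)

/-- The voting measure `ℙ_n` with de Finetti measure `μn`:
`ℙ_n(A) = ∫ P_{tanh m}(A) μn(dm)`. -/
def votingMeasure {M : ℕ} (N : Fin M → ℕ) (μn : Measure (Fin M → ℝ)) :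
    Measure (Conf M N) :=
  μn.bind fun m => prodVote N fun lam => Real.tanh (m lam)

/-- The voting margin `S_{n,lam}` of group `lam`. -/
def margin {M : ℕ} {N : Fin M → ℕ} (lam : Fin M) (ω : Conf M N) : ℝ :=
  ∑ i, val (ω lam i)

/-- The standard Gaussian measure `𝒩(0, I_M)` on `ℝ^M`. -/
def stdGaussian (M : ℕ) : Measure (Fin M → ℝ) :=
  Measure.pi fun _ => gaussianReal 0 1

/-- The function `F_{n,J}(m) = (1/2) mᵀ √α J⁻¹ √α m − Σ_λ α_λ ln cosh m_λ` of the
de Finetti representation of the multi-group Curie–Weiss model, where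
`α_λ = n_λ/n`. -/
def cwFmulti {M : ℕ} (J : Matrix (Fin M) (Fin M) ℝ) (N : Fin M → ℕ)
    (m : Fin M → ℝ) : ℝ :=
  (1 / 2) * ∑ lam, ∑ ν,
      Real.sqrt ((N lam : ℝ) / ∑ κ, (N κ : ℕ)) * J⁻¹ lam ν *
        Real.sqrt ((N ν : ℝ) / ∑ κ, (N κ : ℕ)) * m lam * m ν
    - ∑ lam, ((N lam : ℝ) / ∑ κ, (N κ : ℕ)) * Real.log (Real.cosh (m lam))

/-!
With `D = diag(√n_1, …, √n_M)`, `Q = D J⁻¹ D` and the margins `S_λ = Σ_i x_{λi}`, the left-hand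
side is `exp(½ Sᵀ Q⁻¹ S)`, and the Gaussian integral `∫ exp(S·m − ½ mᵀ Q m) dm` equals
`(2π)^{M/2} det(Q)^{-1/2} exp(½ Sᵀ Q⁻¹ S)` (Hubbard–Stratonovich). On the other side
`P_{tanh m}(x) = Π_λ exp(m_λ S_λ) / (2 cosh m_λ)^{n_λ}` and `n F_{n,J}(m) = ½ mᵀ Q m − Σ_λ n_λ ln cosh m_λ`,
so the `cosh` factors cancel and the integrand is `2⁻ⁿ exp(S·m − ½ mᵀ Q m)`.
-/

section GaussianIntegral

open Matrix Real

variable {ι : Type*} [Fintype ι]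

theorem integral_exp_mul_sub_sq_div_two (u : ℝ) :
    ∫ y : ℝ, exp (u * y - y ^ 2 / 2) = √(2 * π) * exp (u ^ 2 / 2) := by
  have hsq (y : ℝ) : u * y - y ^ 2 / 2 = -(1 / 2) * (y - u) ^ 2 + u ^ 2 / 2 := by ring
  simp_rw [hsq, exp_add, integral_mul_const]
  rw [integral_sub_right_eq_self (fun y => exp (-(1 / 2) * y ^ 2)) u, integral_gaussian]
  norm_num [div_div_eq_mul_div, mul_comm]

theorem integral_exp_dotProduct_sub_half_dotProduct_self (u : ι → ℝ) :
    ∫ y : ι → ℝ, exp (u ⬝ᵥ y - (1 / 2) * (y ⬝ᵥ y))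
      = √(2 * π) ^ Fintype.card ι * exp ((1 / 2) * (u ⬝ᵥ u)) := by
  have hprod (y : ι → ℝ) :
      exp (u ⬝ᵥ y - (1 / 2) * (y ⬝ᵥ y)) = ∏ i, exp (u i * y i - y i ^ 2 / 2) := by
    rw [← exp_sum, dotProduct, dotProduct, Finset.mul_sum, ← Finset.sum_sub_distrib]
    congr 1
    exact Finset.sum_congr rfl fun i _ => by ring
  simp_rw [hprod]
  rw [integral_fintype_prod_volume_eq_prod (fun i y => exp (u i * y - y ^ 2 / 2))]
  simp_rw [integral_exp_mul_sub_sq_div_two]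
  rw [Finset.prod_mul_distrib, Finset.prod_const, ← exp_sum, Finset.card_univ, dotProduct,
    Finset.mul_sum]
  congr 2
  exact Finset.sum_congr rfl fun i _ => by ring

variable [DecidableEq ι]

theorem integral_comp_mulVec {A : Matrix ι ι ℝ} (hA : A.det ≠ 0) (f : (ι → ℝ) → ℝ) :
    ∫ y : ι → ℝ, f (A *ᵥ y) = |A.det|⁻¹ * ∫ y, f y := by
  let e : (ι → ℝ) ≃ₗ[ℝ] (ι → ℝ) := A.toLinearEquiv' (A.invertibleOfIsUnitDet hA.isUnit)
  let em : (ι → ℝ) ≃ᵐ (ι → ℝ) := e.toContinuousLinearEquiv.toHomeomorph.toMeasurableEquiv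
  have hdet : LinearMap.det (e : (ι → ℝ) →ₗ[ℝ] (ι → ℝ)) = A.det := LinearMap.det_toLin' A
  have hmap : Measure.map em volume = ENNReal.ofReal |A.det|⁻¹ • volume := by
    have h := Measure.map_linearMap_addHaar_eq_smul_addHaar volume (hdet ▸ hA)
    rwa [hdet, abs_inv] at h
  calc ∫ y, f (A *ᵥ y) = ∫ y, f y ∂(Measure.map em volume) := (integral_map_equiv em f).symm
    _ = |A.det|⁻¹ * ∫ y, f y := by
        rw [hmap, integral_smul_measure, ENNReal.toReal_ofReal (by positivity), smul_eq_mul]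

open scoped MatrixOrder in
/-- Completing the square, after the substitution `m = Q^{-1/2} y`. -/
theorem integral_exp_dotProduct_sub_half_quadForm {Q : Matrix ι ι ℝ} (hQ : Q.PosDef)
    (t : ι → ℝ) :
    ∫ m : ι → ℝ, exp (t ⬝ᵥ m - (1 / 2) * (m ⬝ᵥ Q *ᵥ m))
      = √(2 * π) ^ Fintype.card ι / √Q.det * exp ((1 / 2) * (t ⬝ᵥ Q⁻¹ *ᵥ t)) := by
  set R := CFC.sqrt Q
  have hRR : R * R = Q := CFC.sqrt_mul_sqrt_self Q hQ.posSemidef.nonneg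
  have hRT : Rᵀ = R := (CFC.sqrt_nonneg Q).posSemidef.isHermitian
  have hdetR : √Q.det = |R.det| := by rw [← hRR, det_mul, ← sq, sqrt_sq_eq_abs]
  have hRu : IsUnit R.det := isUnit_iff_ne_zero.2 fun h => by
    simpa [hdetR, h] using (sqrt_pos.2 hQ.det_pos).ne'
  have hRiT : R⁻¹ᵀ = R⁻¹ := by rw [transpose_nonsing_inv, hRT]
  have hlin (y : ι → ℝ) : t ⬝ᵥ R⁻¹ *ᵥ y = R⁻¹ *ᵥ t ⬝ᵥ y := by
    rw [dotProduct_mulVec, ← mulVec_transpose, hRiT]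
  have hquad (y : ι → ℝ) : R⁻¹ *ᵥ y ⬝ᵥ Q *ᵥ R⁻¹ *ᵥ y = y ⬝ᵥ y := by
    rw [mulVec_mulVec, ← hRR, mul_nonsing_inv_cancel_right _ _ hRu, dotProduct_mulVec,
      ← mulVec_transpose, hRT, mulVec_mulVec, mul_nonsing_inv _ hRu, one_mulVec]
  have hcompl : R⁻¹ *ᵥ t ⬝ᵥ R⁻¹ *ᵥ t = t ⬝ᵥ Q⁻¹ *ᵥ t := by
    rw [dotProduct_mulVec, ← mulVec_transpose, hRiT, mulVec_mulVec, ← Matrix.mul_inv_rev, hRR,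
      dotProduct_comm]
  have hsubst := integral_comp_mulVec (A := R⁻¹) (by simpa using hRu.ne_zero)
    fun m => exp (t ⬝ᵥ m - (1 / 2) * (m ⬝ᵥ Q *ᵥ m))
  simp only [hlin, hquad, integral_exp_dotProduct_sub_half_dotProduct_self, hcompl,
    det_nonsing_inv, Ring.inverse_eq_inv', abs_inv, inv_inv] at hsubst
  rw [hdetR, div_mul_eq_mul_div, hsubst, mul_div_cancel_left₀ _ (abs_ne_zero.2 hRu.ne_zero)]

end GaussianIntegral

section Votes

open Real

instance (b : ℝ) : IsFiniteMeasure (bern b) :=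
  ⟨by simp [bern, ENNReal.add_lt_top]⟩

theorem bern_tanh_singleton (t : ℝ) (v : Bool) :
    bern (tanh t) {v} = ENNReal.ofReal (exp (t * val v) / (2 * cosh t)) := by
  cases v <;> simp [bern, val, tanh_eq_sinh_div_cosh, ← cosh_add_sinh] <;> congr 1 <;> field_simp
  ring

theorem prodVote_tanh_singleton {M : ℕ} (N : Fin M → ℕ) (m : Fin M → ℝ) (x : Conf M N) :
    ((prodVote N fun lam => tanh (m lam)) {x}).toReal
      = ∏ lam, exp (m lam * margin lam x) / (2 * cosh (m lam)) ^ N lam := by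
  have hgroup (lam : Fin M) :
      (Measure.pi fun _ : Fin (N lam) => bern (tanh (m lam))) {x lam}
        = ENNReal.ofReal (exp (m lam * margin lam x) / (2 * cosh (m lam)) ^ N lam) := by
    rw [← Set.univ_pi_singleton, Measure.pi_pi]
    simp_rw [bern_tanh_singleton]
    rw [← ENNReal.ofReal_prod_of_nonneg fun i _ => by positivity, Finset.prod_div_distrib,
      ← exp_sum, Finset.prod_const, Finset.card_univ, Fintype.card_fin, margin, Finset.mul_sum]
  rw [prodVote, ← Set.univ_pi_singleton, Measure.pi_pi]
  simp_rw [hgroup]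
  rw [← ENNReal.ofReal_prod_of_nonneg fun lam _ => by positivity,
    ENNReal.toReal_ofReal (Finset.prod_nonneg fun lam _ => by positivity)]

end Votes

section Rescaling

open Matrix Real

variable {ι K : Type*} [Fintype ι] [DecidableEq ι]

theorem Matrix.PosDef.diagonal_mul_mul_diagonal {A : Matrix ι ι ℝ} (hA : A.PosDef) {d : ι → ℝ}
    (hd : ∀ i, d i ≠ 0) : (diagonal d * A * diagonal d).PosDef := by
  have hinj : Function.Injective (diagonal d).mulVec :=
    mulVec_injective_of_det_ne_zero (by simpa [det_diagonal, Finset.prod_ne_zero_iff] using hd)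
  simpa [diagonal_conjTranspose] using hA.conjTranspose_mul_mul_same hinj

theorem Matrix.inv_diagonal_mul_inv_mul_diagonal [Field K] {A : Matrix ι ι K} (hA : IsUnit A.det)
    {d : ι → K} (hd : ∀ i, d i ≠ 0) :
    (diagonal d * A⁻¹ * diagonal d)⁻¹ = diagonal d⁻¹ * A * diagonal d⁻¹ := by
  have hdd : diagonal d * diagonal d⁻¹ = 1 := by
    rw [diagonal_mul_diagonal, ← diagonal_one]
    exact congrArg diagonal (funext fun i => mul_inv_cancel₀ (hd i))
  apply inv_eq_right_inv
  calc diagonal d * A⁻¹ * diagonal d * (diagonal d⁻¹ * A * diagonal d⁻¹)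
      = diagonal d * (A⁻¹ * (diagonal d * diagonal d⁻¹) * A) * diagonal d⁻¹ := by
        simp only [Matrix.mul_assoc]
    _ = 1 := by rw [hdd, Matrix.mul_one, nonsing_inv_mul _ hA, Matrix.mul_one, hdd]

end Rescaling

section CurieWeiss

open Matrix Real

variable {M : ℕ} (J : Matrix (Fin M) (Fin M) ℝ) (N : Fin M → ℕ)

/-- `diag(√n_1, …, √n_M)`: the paper's `√α` is this matrix divided by `√n`. -/
def sqrtSizeDiag : Matrix (Fin M) (Fin M) ℝ := diagonal fun lam => √(N lam : ℝ)

theorem sum_mul_cwFmulti (m : Fin M → ℝ) :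
    (∑ κ, (N κ : ℝ)) * cwFmulti J N m
      = (1 / 2) * (m ⬝ᵥ (sqrtSizeDiag N * J⁻¹ * sqrtSizeDiag N) *ᵥ m)
        - ∑ lam, (N lam : ℝ) * log (cosh (m lam)) := by
  set n : ℝ := ∑ κ, (N κ : ℝ)
  have hα (lam : Fin M) : n * (N lam / n) = N lam := by
    by_cases hn : n = 0
    · simp [(Finset.sum_eq_zero_iff_of_nonneg fun κ _ => Nat.cast_nonneg (N κ)).1 hn lam
        (Finset.mem_univ _)]
    · field_simp
  have hroot (lam : Fin M) : √n * √(N lam / n) = √(N lam : ℝ) := by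
    rw [← sqrt_mul (by positivity), hα]
  have hquad : n * ∑ lam, ∑ ν, √(N lam / n) * J⁻¹ lam ν * √(N ν / n) * m lam * m ν
      = m ⬝ᵥ (sqrtSizeDiag N * J⁻¹ * sqrtSizeDiag N) *ᵥ m := by
    simp only [dotProduct, mulVec, sqrtSizeDiag, mul_diagonal, diagonal_mul, Finset.mul_sum]
    refine Finset.sum_congr rfl fun lam _ => Finset.sum_congr rfl fun ν _ => ?_
    rw [← hroot lam, ← hroot ν]
    linear_combination (-(√(N lam / n) * J⁻¹ lam ν * √(N ν / n) * m lam * m ν)) *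
      mul_self_sqrt (by positivity : (0 : ℝ) ≤ n)
  have hlog : n * ∑ lam, (N lam / n) * log (cosh (m lam)) = ∑ lam, N lam * log (cosh (m lam)) := by
    simp only [Finset.mul_sum, ← mul_assoc, hα]
  rw [cwFmulti, Nat.cast_sum, mul_sub, ← hquad, ← hlog]
  ring

theorem prodVote_tanh_mul_exp_neg_cwFmulti (m : Fin M → ℝ) (x : Conf M N) :
    ((prodVote N fun lam => tanh (m lam)) {x}).toReal
        * exp (-(∑ κ, (N κ : ℝ)) * cwFmulti J N m)
      = ((2 : ℝ) ^ ∑ κ, N κ)⁻¹ * exp ((fun lam => margin lam x) ⬝ᵥ m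
          - (1 / 2) * (m ⬝ᵥ (sqrtSizeDiag N * J⁻¹ * sqrtSizeDiag N) *ᵥ m)) := by
  have hexp : exp (-(∑ κ, (N κ : ℝ)) * cwFmulti J N m)
      = (∏ lam, cosh (m lam) ^ N lam)
          * exp (-((1 / 2) * (m ⬝ᵥ (sqrtSizeDiag N * J⁻¹ * sqrtSizeDiag N) *ᵥ m))) := by
    rw [neg_mul, sum_mul_cwFmulti, neg_sub, sub_eq_add_neg, exp_add, exp_sum]
    congr 1
    exact Finset.prod_congr rfl fun lam _ => by rw [exp_nat_mul, exp_log (cosh_pos _)]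
  have hfactor (lam : Fin M) : exp (m lam * margin lam x) / (2 * cosh (m lam)) ^ N lam
      * cosh (m lam) ^ N lam = exp (margin lam x * m lam) / 2 ^ N lam := by
    rw [mul_pow, mul_comm (m lam)]
    field_simp
  rw [prodVote_tanh_singleton, hexp, ← mul_assoc, ← Finset.prod_mul_distrib]
  simp_rw [hfactor]
  rw [Finset.prod_div_distrib, ← exp_sum, Finset.prod_pow_eq_pow_sum, sub_eq_add_neg, exp_add]
  simp only [dotProduct]
  ring

theorem sum_coupling_mul_votes_eq_margin_quadForm (x : Conf M N) :
    ∑ lam, ∑ ν, J lam ν / √((N lam : ℝ) * N ν) * ∑ i, ∑ j, val (x lam i) * val (x ν j)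
      = (fun lam => margin lam x) ⬝ᵥ
          (diagonal (fun lam => √(N lam : ℝ))⁻¹ * J * diagonal (fun lam => √(N lam : ℝ))⁻¹)
            *ᵥ fun lam => margin lam x := by
  have hmargin (lam ν : Fin M) :
      ∑ i, ∑ j, val (x lam i) * val (x ν j) = margin lam x * margin ν x :=
    (Finset.sum_mul_sum _ _ _ _).symm
  simp only [hmargin, dotProduct, mulVec, mul_diagonal, diagonal_mul, Finset.mul_sum,
    Pi.inv_apply]
  refine Finset.sum_congr rfl fun lam _ => Finset.sum_congr rfl fun ν _ => ?_
  rw [sqrt_mul (Nat.cast_nonneg _)]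
  ring

end CurieWeiss

theorem multigroup_cwm_de_finetti_general
    (M : ℕ)
    (J : Matrix (Fin M) (Fin M) ℝ) (hJpos : J.PosDef)
    (N : Fin M → ℕ) (hNpos : ∀ lam, 0 < N lam) :
    ∃ c : ℝ, 0 < c ∧ ∀ x : Conf M N,
      Real.exp ((1 / 2) * ∑ lam, ∑ ν,
          J lam ν / Real.sqrt ((N lam : ℝ) * (N ν : ℝ)) *
            ∑ i, ∑ j, val (x lam i) * val (x ν j))
        = c * ∫ m : Fin M → ℝ,
            ((prodVote N fun lam => Real.tanh (m lam)) {x}).toReal *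
              Real.exp (-(∑ κ, (N κ : ℕ) : ℝ) * cwFmulti J N m) := by
  set Q := sqrtSizeDiag N * J⁻¹ * sqrtSizeDiag N
  have hsqrt (lam : Fin M) : √(N lam : ℝ) ≠ 0 := by
    have := hNpos lam
    positivity
  have hQ : Q.PosDef := hJpos.inv.diagonal_mul_mul_diagonal hsqrt
  have hQinv : Q⁻¹ = Matrix.diagonal (fun lam => √(N lam : ℝ))⁻¹ * J
      * Matrix.diagonal (fun lam => √(N lam : ℝ))⁻¹ :=
    Matrix.inv_diagonal_mul_inv_mul_diagonal hJpos.det_pos.ne'.isUnit hsqrt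
  have hdet := hQ.det_pos
  refine ⟨2 ^ (∑ κ, N κ) * √Q.det / √(2 * Real.pi) ^ M, by positivity, fun x => ?_⟩
  simp_rw [prodVote_tanh_mul_exp_neg_cwFmulti]
  rw [integral_const_mul, integral_exp_dotProduct_sub_half_quadForm hQ, hQinv,
    sum_coupling_mul_votes_eq_margin_quadForm, Fintype.card_fin]
  field_simp [(Real.sqrt_pos.2 hdet).ne']

/-- **De Finetti representation of the multi-group Curie–Weiss model**: for a
symmetric positive definite coupling matrix `J` there is a constant `c > 0` such
that for every configuration `x`,
`exp((1/2) Σ_{λ,ν} (J_{λν}/√(n_λ n_ν)) Σ_{i,j} x_{λi} x_{νj})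
  = c ∫_{ℝ^M} P_{tanh m}(x) e^{−n F_{n,J}(m)} dm`. -/
theorem multigroup_cwm_de_finetti
    (M : ℕ) (hM : 1 ≤ M)
    (J : Matrix (Fin M) (Fin M) ℝ) (hJsymm : J.IsSymm) (hJpos : J.PosDef)
    (N : Fin M → ℕ) (hNpos : ∀ lam, 0 < N lam) :
    ∃ c : ℝ, 0 < c ∧ ∀ x : Conf M N,
      Real.exp ((1 / 2) * ∑ lam, ∑ ν,
          J lam ν / Real.sqrt ((N lam : ℝ) * (N ν : ℝ)) *
            ∑ i, ∑ j, val (x lam i) * val (x ν j))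
        = c * ∫ m : Fin M → ℝ,
            ((prodVote N fun lam => Real.tanh (m lam)) {x}).toReal *
              Real.exp (-(∑ κ, (N κ : ℕ) : ℝ) * cwFmulti J N m) :=
  multigroup_cwm_de_finetti_general M J hJpos N hNpos
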